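/- arXiv:math/0311153 — 3 statements merged into one kernel-verified Lean document; each statement's English description precedes it below -/
import Mathlib

section
/- In B_3 = ⟨a, b | aba = bab⟩, the subgroup generated by a² and b² is a free group of rank 2. -/
def B3Rel : Set (FreeGroup Bool) :=
  {FreeGroup.of true * FreeGroup.of false * FreeGroup.of true *
    (FreeGroup.of false * FreeGroup.of true * FreeGroup.of false)⁻¹}

abbrev B3 := PresentedGroup B3Rel

def ga : B3 := PresentedGroup.of true
def gb : B3 := PresentedGroup.of false

/-- generator by a boolean: `true ↦ a`, `false ↦ b`. -/
def gen (x : Bool) : B3 := if x then ga else gb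

/-- A letter: first component is the generator (`true` = a), second the sign
(`true` = positive). -/
abbrev Letter := Bool × Bool

def evalLetter (l : Letter) : B3 := if l.2 then gen l.1 else (gen l.1)⁻¹

def evalWord (w : List Letter) : B3 := (w.map evalLetter).prod

/-- `w` is geodesic: no shorter word represents the same element. -/
def IsGeodesic (w : List Letter) : Prop :=
  ∀ v : List Letter, evalWord v = evalWord w → w.length ≤ v.length

/-- `w` is freely reduced. -/
def Reduced (w : List Letter) : Prop :=
  w.Chain' fun x y => ¬ (x.1 = y.1 ∧ x.2 = !y.2)

def la : Letter := (true, true)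
def lA : Letter := (true, false)
def lb : Letter := (false, true)
def lB : Letter := (false, false)

/-! ### Auxiliary material: the integral Burau representation and ping-pong on ℍ -/

open Matrix UpperHalfPlane Complex
open scoped MatrixGroups

namespace Tits3

def Ma : SL(2,ℤ) := ⟨!![1,1;0,1], by norm_num [Matrix.det_fin_two_of]⟩
def Mb : SL(2,ℤ) := ⟨!![1,0;-1,1], by norm_num [Matrix.det_fin_two_of]⟩
def A2 : SL(2,ℤ) := ⟨!![1,2;0,1], by norm_num [Matrix.det_fin_two_of]⟩
def A2' : SL(2,ℤ) := ⟨!![1,-2;0,1], by norm_num [Matrix.det_fin_two_of]⟩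
def B2 : SL(2,ℤ) := ⟨!![1,0;-2,1], by norm_num [Matrix.det_fin_two_of]⟩
def B2' : SL(2,ℤ) := ⟨!![1,0;2,1], by norm_num [Matrix.det_fin_two_of]⟩

lemma braid : Ma * Mb * Ma = Mb * Ma * Mb := by
  ext i j
  simp only [Matrix.SpecialLinearGroup.coe_mul]
  fin_cases i <;> fin_cases j <;>
    simp [Ma, Mb, Matrix.mul_apply, Fin.sum_univ_succ]

lemma Ma_sq : Ma * Ma = A2 := by
  ext i j
  simp only [Matrix.SpecialLinearGroup.coe_mul]
  fin_cases i <;> fin_cases j <;>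
    simp [Ma, A2, Matrix.mul_apply, Fin.sum_univ_succ]

lemma Mb_sq : Mb * Mb = B2 := by
  ext i j
  simp only [Matrix.SpecialLinearGroup.coe_mul]
  fin_cases i <;> fin_cases j <;>
    simp [Mb, B2, Matrix.mul_apply, Fin.sum_univ_succ]

lemma A2_inv : A2⁻¹ = A2' := by
  apply inv_eq_of_mul_eq_one_right
  ext i j
  simp only [Matrix.SpecialLinearGroup.coe_mul]
  fin_cases i <;> fin_cases j <;>
    simp [A2, A2', Matrix.mul_apply, Fin.sum_univ_succ]

lemma B2_inv : B2⁻¹ = B2' := by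
  apply inv_eq_of_mul_eq_one_right
  ext i j
  simp only [Matrix.SpecialLinearGroup.coe_mul]
  fin_cases i <;> fin_cases j <;>
    simp [B2, B2', Matrix.mul_apply, Fin.sum_univ_succ]

lemma A2coe (z : ℍ) : ((A2 • z : ℍ) : ℂ) = (z : ℂ) + 2 := by
  rw [UpperHalfPlane.specialLinearGroup_apply]
  simp [A2]

lemma A2'coe (z : ℍ) : ((A2' • z : ℍ) : ℂ) = (z : ℂ) - 2 := by
  rw [UpperHalfPlane.specialLinearGroup_apply]
  simp [A2']
  ring

lemma A2re (z : ℍ) : (A2 • z).re = z.re + 2 := by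
  simpa using congrArg Complex.re (A2coe z)

lemma A2're (z : ℍ) : (A2' • z).re = z.re - 2 := by
  simpa using congrArg Complex.re (A2'coe z)

lemma hd1 (z : ℍ) : (1 : ℂ) - 2*(z:ℂ) ≠ 0 := by
  intro h
  have := congrArg Complex.im h
  simp at this
  exact z.im_ne_zero this

lemma hd2 (z : ℍ) : 2*(z:ℂ) + 1 ≠ 0 := by
  intro h
  have := congrArg Complex.im h
  simp at this
  exact z.im_ne_zero this

lemma B2coe (z : ℍ) : ((B2 • z : ℍ) : ℂ) = (z:ℂ) / (1 - 2*(z:ℂ)) := by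
  rw [UpperHalfPlane.specialLinearGroup_apply]
  simp [B2]
  ring_nf

lemma B2'coe (z : ℍ) : ((B2' • z : ℍ) : ℂ) = (z:ℂ) / (2*(z:ℂ) + 1) := by
  rw [UpperHalfPlane.specialLinearGroup_apply]
  simp [B2']

lemma B2abs (z : ℍ) :
    ‖((B2 • z : ℍ) : ℂ) + 1/2‖ = 1/(2 * ‖1 - 2*(z:ℂ)‖) := by
  have h : ((B2 • z : ℍ) : ℂ) + 1/2 = 1 / (2 * (1 - 2*(z:ℂ))) := by
    rw [B2coe]
    have : 1 - (z:ℂ)*2 ≠ 0 := by rw [mul_comm]; exact hd1 z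
    field_simp
    ring
  rw [h, norm_div, norm_mul]
  simp

lemma B2'abs (z : ℍ) :
    ‖((B2' • z : ℍ) : ℂ) - 1/2‖ = 1/(2 * ‖2*(z:ℂ) + 1‖) := by
  have h : ((B2' • z : ℍ) : ℂ) - 1/2 = -1 / (2 * (2*(z:ℂ) + 1)) := by
    rw [B2'coe]
    rw [div_sub_div _ _ (hd2 z) two_ne_zero,
      div_eq_div_iff (mul_ne_zero (hd2 z) two_ne_zero) (mul_ne_zero two_ne_zero (hd2 z))]
    ring
  rw [h, norm_div, norm_mul]
  simp

lemma abs_le_half {w : ℂ} (h : ‖w‖ ≤ 1/2) : w.re^2 + w.im^2 ≤ 1/4 := by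
  have h1 := Complex.sq_norm w
  rw [Complex.normSq_apply] at h1
  nlinarith [norm_nonneg w]

/-- The defining braid relation holds in `SL(2,ℤ)`. -/
lemma relhold : ∀ r ∈ B3Rel,
    (FreeGroup.lift (fun x : Bool => if x then Ma else Mb)) r = 1 := by
  intro r hr
  rw [B3Rel, Set.mem_singleton_iff] at hr
  subst hr
  simp only [_root_.map_mul, map_inv, FreeGroup.lift_apply_of, ite_true, Bool.false_eq_true,
    ite_false]
  rw [mul_inv_eq_one]
  exact braid

def φ : B3 →* SL(2,ℤ) := PresentedGroup.toGroup relhold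

lemma φ_ga : φ ga = Ma := PresentedGroup.toGroup.of relhold
lemma φ_gb : φ gb = Mb := PresentedGroup.toGroup.of relhold

/-- ping-pong sets -/
def XS : Bool → Set ℍ := fun i =>
  if i then {z | 1 ≤ z.re} else {z | ‖(z:ℂ) + 1/2‖ ≤ 1/2}

def YS : Bool → Set ℍ := fun i =>
  if i then {z | z.re ≤ -1} else {z | ‖(z:ℂ) - 1/2‖ ≤ 1/2}

/-- Membership in the small circles bounds the real part and imaginary part. -/
lemma circleX {z : ℍ} (h : z ∈ XS false) : (z.re + 1/2)^2 + z.im^2 ≤ 1/4 := by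
  simp only [XS, Bool.false_eq_true, ite_false, Set.mem_setOf_eq] at h
  have h2 := abs_le_half h
  simp only [Complex.add_re, Complex.add_im, UpperHalfPlane.coe_re, UpperHalfPlane.coe_im] at h2
  norm_num at h2
  convert h2 using 2 <;> norm_num

lemma circleY {z : ℍ} (h : z ∈ YS false) : (z.re - 1/2)^2 + z.im^2 ≤ 1/4 := by
  simp only [YS, Bool.false_eq_true, ite_false, Set.mem_setOf_eq] at h
  have h2 := abs_le_half h
  simp only [Complex.sub_re, Complex.sub_im, UpperHalfPlane.coe_re, UpperHalfPlane.coe_im] at h2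
  norm_num at h2
  convert h2 using 2 <;> norm_num

lemma psi_injective :
    Function.Injective (FreeGroup.lift (fun x : Bool => if x then A2 else B2)) := by
  apply FreeGroup.injective_lift_of_ping_pong _ XS YS
  · -- nonempty
    intro i
    cases i with
    | true =>
      refine ⟨⟨1 + Complex.I, by simp⟩, ?_⟩
      show (1:ℝ) ≤ UpperHalfPlane.re ⟨1 + Complex.I, by simp⟩
      simp [UpperHalfPlane.re]
    | false =>
      refine ⟨⟨-(1/2) + (1/4) * Complex.I, by norm_num⟩, ?_⟩
      show ‖(-(1/2 : ℂ) + (1/4) * Complex.I) + 1/2‖ ≤ 1/2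
      have h : (-(1/2 : ℂ) + (1/4) * Complex.I) + 1/2 = (1/4 : ℂ) * Complex.I := by ring
      rw [h, norm_mul, Complex.norm_I, mul_one, norm_div]
      simp
      norm_num
  · -- X pairwise disjoint
    have key : Disjoint (XS true) (XS false) := by
      rw [Set.disjoint_left]
      intro z hz hz'
      have h2 := circleX hz'
      simp only [XS, ite_true, Set.mem_setOf_eq] at hz
      nlinarith [z.im_pos]
    intro i j hij
    cases i <;> cases j
    · exact absurd rfl hij
    · exact key.symm
    · exact key
    · exact absurd rfl hij
  · -- Y pairwise disjoint
    have key : Disjoint (YS true) (YS false) := by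
      rw [Set.disjoint_left]
      intro z hz hz'
      have h2 := circleY hz'
      simp only [YS, ite_true, Set.mem_setOf_eq] at hz
      nlinarith [z.im_pos]
    intro i j hij
    cases i <;> cases j
    · exact absurd rfl hij
    · exact key.symm
    · exact key
    · exact absurd rfl hij
  · -- X vs Y disjoint
    intro i j
    cases i <;> cases j <;> rw [Set.disjoint_left] <;> intro z hz hz'
    · -- X false, Y false
      have h2 := circleX hz
      have h3 := circleY hz'
      nlinarith [z.im_pos]
    · -- X false, Y true
      have h2 := circleX hz
      simp only [YS, ite_true, Set.mem_setOf_eq] at hz'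
      nlinarith [z.im_pos]
    · -- X true, Y false
      have h3 := circleY hz'
      simp only [XS, ite_true, Set.mem_setOf_eq] at hz
      nlinarith [z.im_pos]
    · -- X true, Y true
      simp only [XS, YS, ite_true, Set.mem_setOf_eq] at hz hz'
      linarith
  · -- a i • (Y i)ᶜ ⊆ X i
    intro i x hx
    obtain ⟨z, hz, rfl⟩ := hx
    cases i with
    | true =>
      have hz' : ¬ z.re ≤ -1 := by
        simpa only [YS, ite_true, Set.mem_compl_iff, Set.mem_setOf_eq] using hz
      show (A2 • z) ∈ XS true
      simp only [XS, ite_true, Set.mem_setOf_eq, A2re]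
      linarith
    | false =>
      have hz' : ¬ ‖(z:ℂ) - 1/2‖ ≤ 1/2 := by
        simpa only [YS, Bool.false_eq_true, ite_false, Set.mem_compl_iff,
          Set.mem_setOf_eq] using hz
      push_neg at hz'
      show ‖((B2 • z : ℍ) : ℂ) + 1/2‖ ≤ 1/2
      rw [B2abs]
      have h1 : (1:ℂ) - 2*(z:ℂ) = -2 * ((z:ℂ) - 1/2) := by ring
      rw [h1, norm_mul]
      simp only [norm_neg, Complex.norm_ofNat]
      rw [div_le_div_iff₀ (by positivity) (by norm_num)]
      nlinarith [hz']
  · -- a⁻¹ i • (X i)ᶜ ⊆ Y i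
    intro i x hx
    obtain ⟨z, hz, rfl⟩ := hx
    cases i with
    | true =>
      have hz' : ¬ (1:ℝ) ≤ z.re := by
        simpa only [XS, ite_true, Set.mem_compl_iff, Set.mem_setOf_eq] using hz
      show (A2⁻¹ • z) ∈ YS true
      rw [A2_inv]
      simp only [YS, ite_true, Set.mem_setOf_eq, A2're]
      linarith
    | false =>
      have hz' : ¬ ‖(z:ℂ) + 1/2‖ ≤ 1/2 := by
        simpa only [XS, Bool.false_eq_true, ite_false, Set.mem_compl_iff,
          Set.mem_setOf_eq] using hz
      push_neg at hz'
      show ‖((B2⁻¹ • z : ℍ) : ℂ) - 1/2‖ ≤ 1/2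
      rw [B2_inv, B2'abs]
      have h1 : 2*(z:ℂ) + 1 = 2 * ((z:ℂ) + 1/2) := by ring
      rw [h1, norm_mul]
      simp only [Complex.norm_ofNat]
      rw [div_le_div_iff₀ (by positivity) (by norm_num)]
      nlinarith [hz']

end Tits3

/-- Tits' conjecture for `B₃`: `⟨a², b²⟩` is free of rank 2, i.e. the natural
map from the free group on two generators sending them to `a²`, `b²` is
injective with range `⟨a², b²⟩`. -/
theorem stmt2 :
    Function.Injective
      (FreeGroup.lift (fun x : Bool => if x then ga ^ 2 else gb ^ 2) : FreeGroup Bool →* B3) ∧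
    (FreeGroup.lift (fun x : Bool => if x then ga ^ 2 else gb ^ 2) : FreeGroup Bool →* B3).range
      = Subgroup.closure {ga ^ 2, gb ^ 2} := by
  constructor
  · -- injectivity
    set L : FreeGroup Bool →* B3 :=
      FreeGroup.lift (fun x : Bool => if x then ga ^ 2 else gb ^ 2) with hL
    have hcomp : Tits3.φ.comp L =
        FreeGroup.lift (fun x : Bool => if x then Tits3.A2 else Tits3.B2) := by
      apply FreeGroup.ext_hom
      intro x
      cases x with
      | true =>
        simp only [MonoidHom.comp_apply, hL, FreeGroup.lift_apply_of, ite_true]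
        rw [map_pow, Tits3.φ_ga, pow_two, Tits3.Ma_sq]
      | false =>
        simp only [MonoidHom.comp_apply, hL, FreeGroup.lift_apply_of, Bool.false_eq_true, ite_false]
        rw [map_pow, Tits3.φ_gb, pow_two, Tits3.Mb_sq]
    have hψ : Function.Injective (Tits3.φ.comp L) := by
      rw [hcomp]; exact Tits3.psi_injective
    intro x y hxy
    apply hψ
    simp only [MonoidHom.comp_apply, hxy]
  · rw [FreeGroup.range_lift_eq_closure]
    congr 1
    ext g
    simp only [Set.mem_range, Set.mem_insert_iff, Set.mem_singleton_iff]
    constructor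
    · rintro ⟨x, rfl⟩
      cases x <;> simp
    · rintro (rfl | rfl)
      · exact ⟨true, by simp⟩
      · exact ⟨false, by simp⟩
end

section
/- Every element of B_3 can be written uniquely as w·(aba)^k where k ∈ ℤ and w is a word in a, b, a⁻¹, b⁻¹ (freely reduced) in which every syllable has even exponent except possibly the last syllable. -/
/-- Evaluation of a word given by its syllables `(generator, exponent)`. -/
def syllEval (l : List (Bool × ℤ)) : B3 := (l.map fun s => (gen s.1) ^ s.2).prod

/-- A genuine syllable decomposition: nonzero exponents and adjacent syllables
use different generators (so the corresponding word is freely reduced). -/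
def IsSyllableWord (l : List (Bool × ℤ)) : Prop :=
  (∀ s ∈ l, s.2 ≠ 0) ∧ l.Chain' fun s t => s.1 ≠ t.1

/-- Every syllable is even except possibly the last one. -/
def AlmostEven (l : List (Bool × ℤ)) : Prop :=
  ∀ i : ℕ, i + 1 < l.length → Even (l[i]!).2

namespace B3NF

def Δ : B3 := ga * gb * ga

lemma braid : ga * gb * ga = gb * ga * gb := by
  have h : (PresentedGroup.mk B3Rel) (FreeGroup.of true * FreeGroup.of false * FreeGroup.of true *
      (FreeGroup.of false * FreeGroup.of true * FreeGroup.of false)⁻¹) = 1 := by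
    apply (QuotientGroup.eq_one_iff _).2
    exact Subgroup.subset_normalClosure rfl
  have := h
  simp only [map_mul, map_inv, mul_inv_eq_one] at this
  simpa [ga, gb, PresentedGroup.of] using this

lemma gen_eq_of (c : Bool) : gen c = PresentedGroup.of c := by cases c <;> rfl

lemma gen_braid (c : Bool) : gen c * gen (!c) * gen c = Δ := by
  cases c <;> simp [gen, Δ, braid]

lemma relhom {G : Type*} [Group G] (f : Bool → G)
    (hf : f true * f false * f true = f false * f true * f false) :
    ∀ r ∈ B3Rel, FreeGroup.lift f r = 1 := by
  intro r hr
  rcases hr with rfl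
  simp only [map_mul, map_inv, FreeGroup.lift_apply_of, mul_inv_eq_one]
  exact hf

def φ : B3 →* B3 :=
  PresentedGroup.toGroup (f := fun x => gen (!x))
    (relhom _ (by
      simp only [Bool.not_true, Bool.not_false]
      simp only [gen, if_true, if_false]
      exact braid.symm))

lemma φ_gen (c : Bool) : φ (gen c) = gen (!c) := by
  rw [gen_eq_of]
  exact PresentedGroup.toGroup.of _

lemma φ_ga : φ ga = gb := by simpa [gen] using φ_gen true
lemma φ_gb : φ gb = ga := by simpa [gen] using φ_gen false

/-- subgroup-generation induction -/
lemma b3_induction (P : B3 → Prop) (h1 : P 1) (hmul : ∀ x y, P x → P y → P (x * y))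
    (hinv : ∀ x, P x → P x⁻¹) (hgen : ∀ c, P (gen c)) : ∀ x, P x := by
  intro x
  have hx : x ∈ Subgroup.closure (Set.range (PresentedGroup.of : Bool → B3)) := by
    rw [PresentedGroup.closure_range_of]; trivial
  refine Subgroup.closure_induction (p := fun y _ => P y) ?_ h1
    (fun a b _ _ ha hb => hmul a b ha hb) (fun a _ ha => hinv a ha) hx
  rintro y ⟨c, rfl⟩
  rw [← gen_eq_of]; exact hgen c

lemma φφ (x : B3) : φ (φ x) = x := by
  refine b3_induction (fun x => φ (φ x) = x) (by simp) (fun a b ha hb => by simp [ha, hb])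
    (fun a ha => by simp [ha]) (fun c => by simp [φ_gen]) x

lemma conjΔ (x : B3) : x * Δ = Δ * φ x := by
  refine b3_induction (fun x => x * Δ = Δ * φ x) (by simp) ?_ ?_ ?_ x
  · intro a b ha hb
    rw [map_mul, mul_assoc, hb, ← mul_assoc, ha, mul_assoc]
  · intro a ha
    rw [map_inv]
    have h1 : φ a = Δ⁻¹ * a * Δ := by rw [mul_assoc, ha]; group
    rw [h1]; group
  · intro c
    cases c
    · rw [show gen false = gb from rfl, φ_gb, Δ]
      nth_rewrite 2 [braid]
      group
    · rw [show gen true = ga from rfl, φ_ga, Δ]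
      nth_rewrite 1 [braid]
      group

lemma conjΔ' (x : B3) : φ x * Δ = Δ * x := by
  have := conjΔ (φ x); rwa [φφ] at this

lemma conjΔinv (x : B3) : x * Δ⁻¹ = Δ⁻¹ * φ x := by
  have h1 : φ x = Δ * x * Δ⁻¹ := by rw [← conjΔ' x]; group
  rw [h1]; group

lemma conjΔinv' (x : B3) : φ x * Δ⁻¹ = Δ⁻¹ * x := by
  have := conjΔinv (φ x); rwa [φφ] at this

lemma conjΔpow (k : ℤ) (x : B3) :
    x * Δ ^ k = Δ ^ k * (if Even k then x else φ x) := by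
  induction k using Int.induction_on with
  | zero => simp
  | succ n ih =>
      rw [zpow_add_one, ← mul_assoc, ih]
      by_cases h : Even (n : ℤ)
      · rw [if_pos h, if_neg (by simpa [Int.even_add_one] using h), mul_assoc, conjΔ]
        group
      · rw [if_neg h, if_pos (by simpa [Int.even_add_one] using h), mul_assoc, conjΔ']
        group
  | pred n ih =>
      rw [zpow_sub_one, ← mul_assoc, ih]
      by_cases h : Even (-(n : ℤ))
      · rw [if_pos h, if_neg (by simpa [Int.even_sub_one] using h), mul_assoc, conjΔinv]
        group
      · rw [if_neg h, if_pos (by simpa [Int.even_sub_one] using h), mul_assoc, conjΔinv']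
        group

/-! ### the rewriting system on reversed syllable lists -/

abbrev NF := List (Bool × ℤ) × ℤ

def rpush (c : Bool) (r : List (Bool × ℤ)) : List (Bool × ℤ) × ℤ :=
  match r with
  | [] => ([(c, 1)], 0)
  | (d, m) :: t =>
    if d = c then
      (if m = -1 then t else (d, m + 1) :: t, 0)
    else if Even m then
      ((c, 1) :: (d, m) :: t, 0)
    else if m = 1 then
      match t with
      | [] => ([(c, -1)], 1)
      | (e, m') :: t' => ((e, m' - 1) :: t', 1)
    else
      ((c, -1) :: (d, m - 1) :: t, 1)

def rpushInv (c : Bool) (r : List (Bool × ℤ)) : List (Bool × ℤ) × ℤ :=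
  match r with
  | [] => ([(c, -1)], 0)
  | (d, m) :: t =>
    if d = c then
      (if m = 1 then t else (d, m - 1) :: t, 0)
    else if Even m then
      ((c, -1) :: (d, m) :: t, 0)
    else if m = -1 then
      match t with
      | [] => ([(c, 1)], -1)
      | (e, m') :: t' => ((e, m' + 1) :: t', -1)
    else
      ((c, 1) :: (d, m + 1) :: t, -1)

-- evaluation rules for rpush
lemma rpush_nil (c : Bool) : rpush c [] = ([(c, 1)], 0) := rfl

lemma rpush_same {c m t} (h : m ≠ -1) : rpush c ((c, m) :: t) = ((c, m + 1) :: t, 0) := by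
  simp [rpush, h]

lemma rpush_same_drop {c t} : rpush c ((c, -1) :: t) = (t, 0) := by
  simp [rpush]

lemma rpush_diff_even {c d m t} (h : d ≠ c) (he : Even m) :
    rpush c ((d, m) :: t) = ((c, 1) :: (d, m) :: t, 0) := by
  simp [rpush, h, he]

lemma rpush_rw {c d m t} (h : d ≠ c) (ho : ¬ Even m) (h1 : m ≠ 1) :
    rpush c ((d, m) :: t) = ((c, -1) :: (d, m - 1) :: t, 1) := by
  simp [rpush, h, ho, h1]

lemma rpush_rw1_nil {c d} (h : d ≠ c) :
    rpush c [(d, 1)] = ([(c, -1)], 1) := by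
  simp [rpush, h]

lemma rpush_rw1_cons {c d e m' t'} (h : d ≠ c) :
    rpush c ((d, 1) :: (e, m') :: t') = ((e, m' - 1) :: t', 1) := by
  simp [rpush, h]

-- evaluation rules for rpushInv
lemma rpushInv_nil (c : Bool) : rpushInv c [] = ([(c, -1)], 0) := rfl

lemma rpushInv_same {c m t} (h : m ≠ 1) : rpushInv c ((c, m) :: t) = ((c, m - 1) :: t, 0) := by
  simp [rpushInv, h]

lemma rpushInv_same_drop {c t} : rpushInv c ((c, 1) :: t) = (t, 0) := by
  simp [rpushInv]

lemma rpushInv_diff_even {c d m t} (h : d ≠ c) (he : Even m) :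
    rpushInv c ((d, m) :: t) = ((c, -1) :: (d, m) :: t, 0) := by
  simp [rpushInv, h, he]

lemma rpushInv_rw {c d m t} (h : d ≠ c) (ho : ¬ Even m) (h1 : m ≠ -1) :
    rpushInv c ((d, m) :: t) = ((c, 1) :: (d, m + 1) :: t, -1) := by
  simp [rpushInv, h, ho, h1]

lemma rpushInv_rw1_nil {c d} (h : d ≠ c) :
    rpushInv c [(d, -1)] = ([(c, 1)], -1) := by
  simp [rpushInv, h]

lemma rpushInv_rw1_cons {c d e m' t'} (h : d ≠ c) :
    rpushInv c ((d, -1) :: (e, m') :: t') = ((e, m' + 1) :: t', -1) := by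
  simp [rpushInv, h]

def act (c : Bool) (p : NF) : NF :=
  ((rpush (if Even p.2 then c else !c) p.1).1,
    p.2 + (rpush (if Even p.2 then c else !c) p.1).2)

def actInv (c : Bool) (p : NF) : NF :=
  ((rpushInv (if Even p.2 then c else !c) p.1).1,
    p.2 + (rpushInv (if Even p.2 then c else !c) p.1).2)

def RValid (r : List (Bool × ℤ)) : Prop :=
  (∀ s ∈ r, s.2 ≠ 0) ∧ r.Chain' (fun s t => s.1 ≠ t.1) ∧ ∀ s ∈ r.tail, Even s.2

lemma rvalid_nil : RValid [] := by refine ⟨by simp, List.isChain_nil, by simp⟩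

lemma rvalid_tail {x t} (h : RValid (x :: t)) : RValid t := by
  obtain ⟨h1, h2, h3⟩ := h
  refine ⟨fun s hs => h1 s (List.mem_cons_of_mem _ hs), h2.tail, fun s hs => ?_⟩
  exact h3 s (List.tail_subset t hs)

lemma rvalid_cons_facts {d m e m' t} (h : RValid ((d, m) :: (e, m') :: t)) :
    m ≠ 0 ∧ e = !d ∧ Even m' ∧ m' ≠ 0 := by
  obtain ⟨h1, h2, h3⟩ := h
  refine ⟨h1 (d, m) (by simp), ?_, h3 (e, m') (by simp), h1 (e, m') (by simp)⟩
  have := List.isChain_cons_cons.1 h2 |>.1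
  simp only [ne_eq] at this
  cases d <;> cases e <;> simp_all

lemma bool_eq_not {d c : Bool} (h : d ≠ c) : d = !c := by cases c <;> cases d <;> simp_all

lemma bool_not_ne (c : Bool) : c ≠ !c := by cases c <;> simp

lemma even_ne_zero_sub_one {m : ℤ} (he : Even m) (h0 : m ≠ 0) : m - 1 ≠ 0 := by
  intro hh; have := Int.even_iff.1 he; omega

lemma even_ne_zero_add_one {m : ℤ} (he : Even m) (h0 : m ≠ 0) : m + 1 ≠ 0 := by
  intro hh; have := Int.even_iff.1 he; omega

lemma odd_ne_zero {m : ℤ} (ho : ¬ Even m) : m ≠ 0 := by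
  intro hh; exact ho (hh ▸ Even.zero)

lemma rpush_valid {c r} (h : RValid r) : RValid (rpush c r).1 := by
  obtain ⟨h1, h2, h3⟩ := h
  match r with
  | [] => exact ⟨by simp [rpush_nil], List.isChain_singleton _, by simp [rpush_nil]⟩
  | (d, m) :: t =>
    have hm0 : m ≠ 0 := h1 (d, m) (by simp)
    by_cases hdc : d = c
    · subst hdc
      by_cases hm : m = -1
      · subst hm
        rw [rpush_same_drop]
        exact rvalid_tail ⟨h1, h2, h3⟩
      · rw [rpush_same hm]
        refine ⟨?_, ?_, h3⟩
        · intro s hs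
          rcases List.mem_cons.1 hs with rfl | hs
          · show m + 1 ≠ 0; omega
          · exact h1 s (List.mem_cons_of_mem _ hs)
        · unfold List.Chain' at h2 ⊢; rw [List.isChain_cons] at h2 ⊢; exact h2
    · by_cases he : Even m
      · rw [rpush_diff_even hdc he]
        refine ⟨?_, ?_, ?_⟩
        · intro s hs
          rcases List.mem_cons.1 hs with rfl | hs
          · show (1:ℤ) ≠ 0; omega
          · exact h1 s hs
        · unfold List.Chain'; rw [List.isChain_cons_cons]
          exact ⟨fun hh => hdc hh.symm, h2⟩
        · intro s hs
          rcases List.mem_cons.1 hs with rfl | hs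
          · exact he
          · exact h3 s hs
      · by_cases hm1 : m = 1
        · subst hm1
          match t with
          | [] =>
            rw [rpush_rw1_nil hdc]
            exact ⟨by simp, List.isChain_singleton _, by simp⟩
          | (e, m') :: t' =>
            have hf := rvalid_cons_facts ⟨h1, h2, h3⟩
            rw [rpush_rw1_cons hdc]
            refine ⟨?_, ?_, ?_⟩
            · intro s hs
              rcases List.mem_cons.1 hs with rfl | hs
              · show m' - 1 ≠ 0
                exact even_ne_zero_sub_one hf.2.2.1 hf.2.2.2
              · exact h1 s (by simp; right; right; exact hs)
            · have := (List.isChain_cons.1 h2).2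
              unfold List.Chain'; rw [List.isChain_cons] at this ⊢; exact this
            · intro s hs
              have hs' : s ∈ t' := by simpa using hs
              exact h3 s (by simp [hs'])
        · rw [rpush_rw hdc he hm1]
          refine ⟨?_, ?_, ?_⟩
          · intro s hs
            rcases List.mem_cons.1 hs with rfl | hs
            · show (-1:ℤ) ≠ 0; omega
            rcases List.mem_cons.1 hs with rfl | hs
            · show m - 1 ≠ 0; omega
            · exact h1 s (by simp [hs])
          · unfold List.Chain'; rw [List.isChain_cons_cons]
            refine ⟨fun hh => hdc hh.symm, ?_⟩
            unfold List.Chain' at h2; rw [List.isChain_cons] at h2 ⊢; exact h2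
          · intro s hs
            rcases List.mem_cons.1 hs with rfl | hs
            · exact (Int.even_sub_one).2 he
            · exact h3 s hs

def negL (r : List (Bool × ℤ)) : List (Bool × ℤ) := r.map (fun s => (s.1, -s.2))

@[simp] lemma negL_nil : negL [] = [] := rfl
@[simp] lemma negL_cons {x : Bool × ℤ} {t} : negL (x :: t) = (x.1, -x.2) :: negL t := rfl

@[simp] lemma negL_negL (r : List (Bool × ℤ)) : negL (negL r) = r := by
  induction r with
  | nil => rfl
  | cons x t ih => simp [ih]

lemma rvalid_negL {r} (h : RValid r) : RValid (negL r) := by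
  obtain ⟨h1, h2, h3⟩ := h
  refine ⟨?_, ?_, ?_⟩
  · intro s hs
    simp only [negL, List.mem_map] at hs
    obtain ⟨x, hx, rfl⟩ := hs
    simpa using h1 x hx
  · unfold List.Chain'; rw [negL, List.isChain_map]
    exact h2
  · intro s hs
    rcases r with _ | ⟨x, t⟩
    · simp at hs
    · simp only [negL_cons, List.tail_cons] at hs
      simp only [negL, List.mem_map] at hs
      obtain ⟨x', hx', rfl⟩ := hs
      simpa using h3 x' hx'

lemma negL_cons' {d : Bool} {m : ℤ} {t} : negL ((d, m) :: t) = (d, -m) :: negL t := rfl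

lemma rpushInv_eq_neg (c : Bool) (r : List (Bool × ℤ)) :
    rpushInv c r = (negL (rpush c (negL r)).1, -(rpush c (negL r)).2) := by
  match r with
  | [] =>
    rw [rpushInv_nil, negL_nil, rpush_nil]
    simp [negL]
  | (d, m) :: t =>
    rw [negL_cons']
    by_cases hdc : d = c
    · subst hdc
      by_cases hm : m = 1
      · subst hm
        rw [rpushInv_same_drop, show (-1 : ℤ) = -1 from rfl, rpush_same_drop]
        simp
      · rw [rpushInv_same hm, rpush_same (by omega)]
        have hx : -(-m + 1) = m - 1 := by ring
        simp only [negL_cons', negL_negL, neg_zero, neg_neg, hx]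
    · by_cases he : Even m
      · rw [rpushInv_diff_even hdc he, rpush_diff_even hdc (by show Even (-m); simpa using he)]
        simp [negL_cons', negL_negL]
      · by_cases hm1 : m = -1
        · subst hm1
          match t with
          | [] =>
            rw [show negL [] = [] from rfl, rpushInv_rw1_nil hdc,
              show (-(-1) : ℤ) = 1 from rfl, rpush_rw1_nil hdc]
            simp [negL]
          | (e, m') :: t' =>
            rw [negL_cons', rpushInv_rw1_cons hdc,
              show (-(-1) : ℤ) = 1 from rfl, rpush_rw1_cons hdc]
            have hx : -(-m' - 1) = m' + 1 := by ring
            simp only [negL_cons', negL_negL, hx]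
        · rw [rpushInv_rw hdc he hm1,
            rpush_rw hdc (by show ¬ Even (-m); simpa using he) (by omega)]
          have hx : -(-m - 1) = m + 1 := by ring
          have hy : (- -1 : ℤ) = 1 := by ring
          simp only [negL_cons', negL_negL, hx, hy]

lemma rpushInv_valid {c r} (h : RValid r) : RValid (rpushInv c r).1 := by
  rw [rpushInv_eq_neg]
  exact rvalid_negL (rpush_valid (rvalid_negL h))

lemma act_valid {c p} (h : RValid (Prod.fst p)) : RValid (act c p).1 := rpush_valid h

lemma actInv_valid {c p} (h : RValid (Prod.fst p)) : RValid (actInv c p).1 := rpushInv_valid h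

lemma rpush_rpushInv {c r} (h : RValid r) :
    ((rpush c r).2 = 0 ∧ rpushInv c (rpush c r).1 = (r, 0)) ∨
    ((rpush c r).2 = 1 ∧ rpushInv (!c) (rpush c r).1 = (r, -1)) := by
  obtain ⟨h1, h2, h3⟩ := h
  match r with
  | [] =>
    left
    rw [rpush_nil]
    exact ⟨rfl, by rw [rpushInv_same_drop]⟩
  | (d, m) :: t =>
    have hm0 : m ≠ 0 := h1 (d, m) (by simp)
    by_cases hdc : d = c
    · subst hdc
      by_cases hm : m = -1
      · subst hm
        left
        rw [rpush_same_drop]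
        refine ⟨rfl, ?_⟩
        match t with
        | [] => exact rpushInv_nil d
        | (e, m') :: t' =>
          have hf := rvalid_cons_facts ⟨h1, h2, h3⟩
          have hed : e ≠ d := by rw [hf.2.1]; exact Ne.symm (bool_not_ne d)
          rw [rpushInv_diff_even hed hf.2.2.1]
      · left
        rw [rpush_same hm]
        refine ⟨rfl, ?_⟩
        rw [rpushInv_same (by omega)]
        have : m + 1 - 1 = m := by ring
        rw [this]
    · by_cases he : Even m
      · left
        rw [rpush_diff_even hdc he]
        exact ⟨rfl, by rw [rpushInv_same_drop]⟩
      · by_cases hm1 : m = 1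
        · subst hm1
          match t with
          | [] =>
            right
            rw [rpush_rw1_nil hdc]
            refine ⟨rfl, ?_⟩
            show rpushInv (!c) [(c, -1)] = ([(d, 1)], -1)
            rw [rpushInv_rw1_nil (bool_not_ne c), ← bool_eq_not hdc]
          | (e, m') :: t' =>
            right
            have hf := rvalid_cons_facts ⟨h1, h2, h3⟩
            have hed : e = c := by rw [hf.2.1, bool_eq_not hdc]; simp
            subst hed
            rw [rpush_rw1_cons hdc]
            refine ⟨rfl, ?_⟩
            have hec : e ≠ !e := bool_not_ne e
            rw [rpushInv_rw hec (by
                have := Int.even_iff.1 hf.2.2.1; rw [Int.even_iff]; omega)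
              (by have := Int.even_iff.1 hf.2.2.1; omega)]
            have h5 : m' - 1 + 1 = m' := by ring
            rw [h5, ← bool_eq_not hdc]
        · right
          rw [rpush_rw hdc he hm1]
          refine ⟨rfl, ?_⟩
          show rpushInv (!c) ((c, -1) :: (d, m - 1) :: t) = ((d, m) :: t, -1)
          rw [rpushInv_rw1_cons (bool_not_ne c)]
          have h5 : m - 1 + 1 = m := by ring
          rw [h5]

lemma rpush_eq_neg (c : Bool) (r : List (Bool × ℤ)) :
    rpush c r = (negL (rpushInv c (negL r)).1, -(rpushInv c (negL r)).2) := by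
  have h := rpushInv_eq_neg c (negL r)
  rw [negL_negL] at h
  rw [h]
  simp

lemma rpushInv_rpush {c r} (h : RValid r) :
    ((rpushInv c r).2 = 0 ∧ rpush c (rpushInv c r).1 = (r, 0)) ∨
    ((rpushInv c r).2 = -1 ∧ rpush (!c) (rpushInv c r).1 = (r, 1)) := by
  have hneg := rvalid_negL h
  rcases rpush_rpushInv (c := c) (r := negL r) hneg with ⟨hδ, hinv⟩ | ⟨hδ, hinv⟩
  · left
    rw [rpushInv_eq_neg]
    refine ⟨by simp [hδ], ?_⟩
    rw [rpush_eq_neg, negL_negL, hinv]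
    simp
  · right
    rw [rpushInv_eq_neg]
    refine ⟨by simp [hδ], ?_⟩
    rw [rpush_eq_neg, negL_negL, hinv]
    simp

lemma parity_flip (k : ℤ) (c : Bool) :
    (if Even (k + 1) then c else !c) = !(if Even k then c else !c) := by
  by_cases hk : Even k <;> simp [hk, Int.even_add_one]

lemma parity_flip' (k : ℤ) (c : Bool) :
    (if Even (k + -1) then c else !c) = !(if Even k then c else !c) := by
  have : Even (k + -1) ↔ ¬ Even k := by
    rw [show k + -1 = k - 1 by ring, Int.even_sub_one]
  by_cases hk : Even k <;> simp [hk, this]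

lemma actInv_act {c : Bool} {p : NF} (h : RValid p.1) : actInv c (act c p) = p := by
  obtain ⟨r, k⟩ := p
  show actInv c ((rpush (if Even k then c else !c) r).1,
    k + (rpush (if Even k then c else !c) r).2) = (r, k)
  rcases rpush_rpushInv (c := if Even k then c else !c) h with ⟨hδ, hinv⟩ | ⟨hδ, hinv⟩
  · rw [hδ, add_zero]
    show ((rpushInv (if Even k then c else !c) _).1,
      k + (rpushInv (if Even k then c else !c) _).2) = (r, k)
    rw [hinv]
    simp
  · rw [hδ]
    show ((rpushInv (if Even (k + 1) then c else !c) _).1,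
      (k + 1) + (rpushInv (if Even (k + 1) then c else !c) _).2) = (r, k)
    rw [parity_flip, hinv]
    simp only [Prod.mk.injEq]
    exact ⟨by trivial, by omega⟩

lemma act_actInv {c : Bool} {p : NF} (h : RValid p.1) : act c (actInv c p) = p := by
  obtain ⟨r, k⟩ := p
  show act c ((rpushInv (if Even k then c else !c) r).1,
    k + (rpushInv (if Even k then c else !c) r).2) = (r, k)
  rcases rpushInv_rpush (c := if Even k then c else !c) h with ⟨hδ, hinv⟩ | ⟨hδ, hinv⟩
  · rw [hδ, add_zero]
    show ((rpush (if Even k then c else !c) _).1,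
      k + (rpush (if Even k then c else !c) _).2) = (r, k)
    rw [hinv]
    simp
  · rw [hδ]
    show ((rpush (if Even (k + -1) then c else !c) _).1,
      (k + -1) + (rpush (if Even (k + -1) then c else !c) _).2) = (r, k)
    rw [parity_flip', hinv]
    simp only [Prod.mk.injEq]
    exact ⟨by trivial, by omega⟩

/-! ### parity and flip lemmas, and the key Δ-lemma -/

lemma act_even {c : Bool} {r : List (Bool × ℤ)} {k : ℤ} (hk : Even k) :
    act c (r, k) = ((rpush c r).1, k + (rpush c r).2) := by
  show ((rpush (if Even k then c else !c) r).1, k + (rpush (if Even k then c else !c) r).2) = _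
  rw [if_pos hk]

lemma act_odd {c : Bool} {r : List (Bool × ℤ)} {k : ℤ} (hk : ¬ Even k) :
    act c (r, k) = ((rpush (!c) r).1, k + (rpush (!c) r).2) := by
  show ((rpush (if Even k then c else !c) r).1, k + (rpush (if Even k then c else !c) r).2) = _
  rw [if_neg hk]

def flipL (r : List (Bool × ℤ)) : List (Bool × ℤ) := r.map (fun s => (!s.1, s.2))

@[simp] lemma flipL_nil : flipL [] = [] := rfl
lemma flipL_cons' {d : Bool} {m : ℤ} {t} : flipL ((d, m) :: t) = (!d, m) :: flipL t := rfl
@[simp] lemma flipL_flipL (r : List (Bool × ℤ)) : flipL (flipL r) = r := by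
  induction r with
  | nil => rfl
  | cons x t ih => cases x; simp [flipL_cons', ih]

lemma rvalid_flipL {r} (h : RValid r) : RValid (flipL r) := by
  obtain ⟨h1, h2, h3⟩ := h
  refine ⟨?_, ?_, ?_⟩
  · intro s hs
    simp only [flipL, List.mem_map] at hs
    obtain ⟨x, hx, rfl⟩ := hs
    simpa using h1 x hx
  · unfold List.Chain' at h2 ⊢; rw [flipL, List.isChain_map]
    exact h2.imp (fun a b hab => by simpa using hab)
  · intro s hs
    rcases r with _ | ⟨x, t⟩
    · simp at hs
    · cases x
      simp only [flipL_cons', List.tail_cons] at hs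
      simp only [flipL, List.mem_map] at hs
      obtain ⟨x', hx', rfl⟩ := hs
      simpa using h3 x' hx'

lemma bool_ne_not {d c : Bool} (h : d ≠ c) : (!d) ≠ (!c) := by
  cases c <;> cases d <;> simp_all

lemma rpush_flip (c : Bool) (r : List (Bool × ℤ)) :
    rpush (!c) (flipL r) = (flipL (rpush c r).1, (rpush c r).2) := by
  match r with
  | [] => rw [flipL_nil, rpush_nil, rpush_nil]; rfl
  | (d, m) :: t =>
    rw [flipL_cons']
    by_cases hdc : d = c
    · subst hdc
      by_cases hm : m = -1
      · subst hm
        rw [rpush_same_drop, rpush_same_drop]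
      · rw [rpush_same hm, rpush_same hm, flipL_cons']
    · by_cases he : Even m
      · rw [rpush_diff_even (bool_ne_not hdc) he, rpush_diff_even hdc he,
          flipL_cons', flipL_cons']
      · by_cases hm1 : m = 1
        · subst hm1
          match t with
          | [] => rw [flipL_nil, rpush_rw1_nil (bool_ne_not hdc), rpush_rw1_nil hdc]; rfl
          | (e, m') :: t' =>
            rw [flipL_cons', rpush_rw1_cons (bool_ne_not hdc), rpush_rw1_cons hdc,
              flipL_cons']
        · rw [rpush_rw (bool_ne_not hdc) he hm1, rpush_rw hdc he hm1,
            flipL_cons', flipL_cons']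

lemma act_flip (c : Bool) (r : List (Bool × ℤ)) (k : ℤ) :
    act c (flipL r, k) = (flipL (act (!c) (r, k)).1, (act (!c) (r, k)).2) := by
  have hgen : (if Even k then c else !c) = !(if Even k then !c else !(!c)) := by
    by_cases hk : Even k <;> simp [hk]
  show ((rpush (if Even k then c else !c) (flipL r)).1,
      k + (rpush (if Even k then c else !c) (flipL r)).2) = _
  rw [hgen, rpush_flip]
  rfl

lemma act_shift (c : Bool) (r : List (Bool × ℤ)) (k : ℤ) :
    act c (r, k + 1) = ((act (!c) (r, k)).1, (act (!c) (r, k)).2 + 1) := by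
  have hgen : (if Even (k + 1) then c else !c) = (if Even k then !c else !(!c)) := by
    by_cases hk : Even k <;> simp [hk, Int.even_add_one]
  show ((rpush (if Even (k + 1) then c else !c) r).1,
      (k + 1) + (rpush (if Even (k + 1) then c else !c) r).2) = _
  rw [hgen]
  show _ = ((rpush (if Even k then !c else !(!c)) r).1,
      (k + (rpush (if Even k then !c else !(!c)) r).2) + 1)
  simp only [Prod.mk.injEq]
  exact ⟨by trivial, by ring⟩

lemma aba_even {r : List (Bool × ℤ)} {k : ℤ} (h : RValid r) (hk : Even k) :
    act true (act false (act true (r, k))) = (r, k + 1) := by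
  obtain ⟨h1, h2, h3⟩ := h
  have hk1 : ¬ Even (k + 1) := by simp [Int.even_add_one, hk]
  match r with
  | [] =>
    have s1 : act true (([] : List (Bool × ℤ)), k) = ([(true, 1)], k) := by
      rw [act_even hk, rpush_nil]; simp
    have s2 : act false ([(true, 1)], k) = ([(false, -1)], k + 1) := by
      rw [act_even hk, rpush_rw1_nil (by decide)]
    have s3 : act true ([(false, -1)], k + 1) = ([], k + 1) := by
      rw [act_odd hk1]; simp only [Bool.not_true, Bool.not_false]; rw [rpush_same_drop]; simp
    rw [s1, s2, s3]
  | (d, m) :: t =>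
    have hm0 : m ≠ 0 := h1 (d, m) (by simp)
    cases d
    · -- d = false
      by_cases he : Even m
      · have s1 : act true ((false, m) :: t, k) = ((true, 1) :: (false, m) :: t, k) := by
          rw [act_even hk, rpush_diff_even (by decide) he]; simp
        have s2 : act false ((true, 1) :: (false, m) :: t, k)
            = ((false, m - 1) :: t, k + 1) := by
          rw [act_even hk, rpush_rw1_cons (by decide)]
        have s3 : act true ((false, m - 1) :: t, k + 1) = ((false, m) :: t, k + 1) := by
          rw [act_odd hk1]; simp only [Bool.not_true, Bool.not_false]; rw [rpush_same (by omega), show m - 1 + 1 = m by ring]; simp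
        rw [s1, s2, s3]
      · by_cases hm1 : m = 1
        · subst hm1
          match t with
          | [] =>
            have s1 : act true ([((false : Bool), (1 : ℤ))], k) = ([(true, -1)], k + 1) := by
              rw [act_even hk, rpush_rw1_nil (by decide)]
            have s2 : act false ([((true : Bool), (-1 : ℤ))], k + 1) = ([], k + 1) := by
              rw [act_odd hk1]; simp only [Bool.not_true, Bool.not_false]; rw [rpush_same_drop]; simp
            have s3 : act true (([] : List (Bool × ℤ)), k + 1) = ([(false, 1)], k + 1) := by
              rw [act_odd hk1]; simp only [Bool.not_true, Bool.not_false]; rw [rpush_nil]; simp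
            rw [s1, s2, s3]
          | (e, m2) :: t2 =>
            have hf := rvalid_cons_facts ⟨h1, h2, h3⟩
            have he2 : e = true := by simpa using hf.2.1
            subst he2
            have hm2 : m2 ≠ 0 := hf.2.2.2
            have hm2e : Even m2 := hf.2.2.1
            have s1 : act true ((false, 1) :: (true, m2) :: t2, k)
                = ((true, m2 - 1) :: t2, k + 1) := by
              rw [act_even hk, rpush_rw1_cons (by decide)]
            have s2 : act false ((true, m2 - 1) :: t2, k + 1)
                = ((true, m2) :: t2, k + 1) := by
              rw [act_odd hk1]; simp only [Bool.not_true, Bool.not_false]; rw [rpush_same (by omega), show m2 - 1 + 1 = m2 by ring]; simp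
            have s3 : act true ((true, m2) :: t2, k + 1)
                = ((false, 1) :: (true, m2) :: t2, k + 1) := by
              rw [act_odd hk1]; simp only [Bool.not_true, Bool.not_false]; rw [rpush_diff_even (by decide) hm2e]; simp
            rw [s1, s2, s3]
        · have s1 : act true ((false, m) :: t, k)
              = ((true, -1) :: (false, m - 1) :: t, k + 1) := by
            rw [act_even hk, rpush_rw (by decide) he hm1]
          have s2 : act false ((true, -1) :: (false, m - 1) :: t, k + 1)
              = ((false, m - 1) :: t, k + 1) := by
            rw [act_odd hk1]; simp only [Bool.not_true, Bool.not_false]; rw [rpush_same_drop]; simp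
          have s3 : act true ((false, m - 1) :: t, k + 1) = ((false, m) :: t, k + 1) := by
            rw [act_odd hk1]; simp only [Bool.not_true, Bool.not_false]; rw [rpush_same (by omega), show m - 1 + 1 = m by ring]; simp
          rw [s1, s2, s3]
    · -- d = true
      by_cases hm : m = -1
      · have s1 : act true ((true, m) :: t, k) = (t, k) := by
          subst hm
          rw [act_even hk, rpush_same_drop]; simp
        match t with
        | [] =>
          have s2 : act false (([] : List (Bool × ℤ)), k) = ([(false, 1)], k) := by
            rw [act_even hk, rpush_nil]; simp
          have s3 : act true ([((false : Bool), (1 : ℤ))], k) = ([(true, -1)], k + 1) := by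
            rw [act_even hk, rpush_rw1_nil (by decide)]
          rw [s1, s2, s3, hm]
        | (e, m2) :: t2 =>
          have hf := rvalid_cons_facts (show RValid ((true, m) :: (e, m2) :: t2) from ⟨h1, h2, h3⟩)
          have he2 : e = false := by simpa using hf.2.1
          subst he2
          have hm2 : m2 ≠ 0 := hf.2.2.2
          have hm2e : Even m2 := hf.2.2.1
          have s2 : act false ((false, m2) :: t2, k) = ((false, m2 + 1) :: t2, k) := by
            rw [act_even hk, rpush_same (by
              intro hh; rw [hh] at hm2e; exact (by decide : ¬ Even (-1 : ℤ)) hm2e)]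
            simp
          have s3 : act true ((false, m2 + 1) :: t2, k)
              = ((true, -1) :: (false, m2) :: t2, k + 1) := by
            rw [act_even hk, rpush_rw (by decide)
              (by simp [Int.even_add_one, hm2e]) (by omega),
              show m2 + 1 - 1 = m2 by ring]
          rw [s1, s2, s3, hm]
      · have s1 : act true ((true, m) :: t, k) = ((true, m + 1) :: t, k) := by
          rw [act_even hk, rpush_same hm]; simp
        by_cases he : Even m
        · have s2 : act false ((true, m + 1) :: t, k)
              = ((false, -1) :: (true, m) :: t, k + 1) := by
            rw [act_even hk, rpush_rw (by decide)
              (by simp [Int.even_add_one, he]) (by omega),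
              show m + 1 - 1 = m by ring]
          have s3 : act true ((false, -1) :: (true, m) :: t, k + 1)
              = ((true, m) :: t, k + 1) := by
            rw [act_odd hk1]; simp only [Bool.not_true, Bool.not_false]; rw [rpush_same_drop]; simp
          rw [s1, s2, s3]
        · have s2 : act false ((true, m + 1) :: t, k)
              = ((false, 1) :: (true, m + 1) :: t, k) := by
            rw [act_even hk, rpush_diff_even (by decide) (Int.even_add_one.2 he)]; simp
          have s3 : act true ((false, 1) :: (true, m + 1) :: t, k)
              = ((true, m) :: t, k + 1) := by
            rw [act_even hk, rpush_rw1_cons (by decide), show m + 1 - 1 = m by ring]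
          rw [s1, s2, s3]

lemma bab_even {r : List (Bool × ℤ)} {k : ℤ} (h : RValid r) (hk : Even k) :
    act false (act true (act false (r, k))) = (r, k + 1) := by
  have h' : RValid (flipL r) := rvalid_flipL h
  have hab := aba_even h' hk
  set p1 := act true (flipL r, k) with hp1
  set p2 := act false p1 with hp2
  set p3 := act true p2 with hp3
  have e0 : act false (r, k) = (flipL p1.1, p1.2) := by
    have hh := act_flip false (flipL r) k
    rw [flipL_flipL] at hh
    simp only [Bool.not_false] at hh
    rw [hh, ← hp1]
  have e1 : act true (flipL p1.1, p1.2) = (flipL p2.1, p2.2) := by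
    have hh := act_flip true p1.1 p1.2
    rw [Prod.mk.eta] at hh
    simp only [Bool.not_true] at hh
    rw [hh, ← hp2]
  have e2 : act false (flipL p2.1, p2.2) = (flipL p3.1, p3.2) := by
    have hh := act_flip false p2.1 p2.2
    rw [Prod.mk.eta] at hh
    simp only [Bool.not_false] at hh
    rw [hh, ← hp3]
  rw [e0, e1, e2, hab]
  simp

lemma aba_all {p : NF} (h : RValid p.1) :
    act true (act false (act true p)) = (p.1, p.2 + 1) := by
  obtain ⟨r, k⟩ := p
  by_cases hk : Even k
  · exact aba_even h hk
  · have hk' : Even (k - 1) := by rwa [Int.even_sub_one]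
    have hb := bab_even h hk'
    set q1 := act false (r, k - 1) with hq1
    set q2 := act true q1 with hq2
    set q3 := act false q2 with hq3
    have hs1 : act true (r, k) = (q1.1, q1.2 + 1) := by
      have hh := act_shift true r (k - 1)
      rw [show k - 1 + 1 = k by ring] at hh
      simp only [Bool.not_true] at hh
      rw [hh, ← hq1]
    rw [hs1]
    have hs2 : act false (q1.1, q1.2 + 1) = (q2.1, q2.2 + 1) := by
      have hh := act_shift false q1.1 q1.2
      rw [Prod.mk.eta] at hh
      simp only [Bool.not_false] at hh
      rw [hh, ← hq2]
    rw [hs2]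
    have hs3 : act true (q2.1, q2.2 + 1) = (q3.1, q3.2 + 1) := by
      have hh := act_shift true q2.1 q2.2
      rw [Prod.mk.eta] at hh
      simp only [Bool.not_true] at hh
      rw [hh, ← hq3]
    rw [hs3, hb]
    show (r, k - 1 + 1 + 1) = (r, k + 1)
    rw [show k - 1 + 1 + 1 = k + 1 by ring]

lemma bab_all {p : NF} (h : RValid p.1) :
    act false (act true (act false p)) = (p.1, p.2 + 1) := by
  obtain ⟨r, k⟩ := p
  by_cases hk : Even k
  · exact bab_even h hk
  · have hk' : Even (k - 1) := by rwa [Int.even_sub_one]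
    have hb := aba_even h hk'
    set q1 := act true (r, k - 1) with hq1
    set q2 := act false q1 with hq2
    set q3 := act true q2 with hq3
    have hs1 : act false (r, k) = (q1.1, q1.2 + 1) := by
      have hh := act_shift false r (k - 1)
      rw [show k - 1 + 1 = k by ring] at hh
      simp only [Bool.not_false] at hh
      rw [hh, ← hq1]
    rw [hs1]
    have hs2 : act true (q1.1, q1.2 + 1) = (q2.1, q2.2 + 1) := by
      have hh := act_shift true q1.1 q1.2
      rw [Prod.mk.eta] at hh
      simp only [Bool.not_true] at hh
      rw [hh, ← hq2]
    rw [hs2]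
    have hs3 : act false (q2.1, q2.2 + 1) = (q3.1, q3.2 + 1) := by
      have hh := act_shift false q2.1 q2.2
      rw [Prod.mk.eta] at hh
      simp only [Bool.not_false] at hh
      rw [hh, ← hq3]
    rw [hs3, hb]
    show (r, k - 1 + 1 + 1) = (r, k + 1)
    rw [show k - 1 + 1 + 1 = k + 1 by ring]

/-! ### the permutation action of B3 on normal forms -/

def S : Type := {p : NF // RValid p.1}

def eperm (c : Bool) : Equiv.Perm S where
  toFun p := ⟨act c p.1, act_valid p.2⟩
  invFun p := ⟨actInv c p.1, actInv_valid p.2⟩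
  left_inv p := Subtype.ext (actInv_act p.2)
  right_inv p := Subtype.ext (act_actInv p.2)

lemma eperm_braid :
    eperm true * eperm false * eperm true = eperm false * eperm true * eperm false := by
  apply Equiv.ext
  intro p
  simp only [Equiv.Perm.mul_apply]
  apply Subtype.ext
  show act true (act false (act true p.1)) = act false (act true (act false p.1))
  rw [aba_all p.2, bab_all p.2]

def Hrel : ∀ r ∈ B3Rel, FreeGroup.lift (fun c => MulOpposite.op (eperm c)) r = 1 :=
  relhom _ (by
    simp only [← MulOpposite.op_mul]
    exact congrArg MulOpposite.op
      (by rw [← mul_assoc, ← mul_assoc, eperm_braid]))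

def Hhom : B3 →* (Equiv.Perm S)ᵐᵒᵖ := PresentedGroup.toGroup Hrel

lemma Hhom_of (c : Bool) : Hhom (PresentedGroup.of c) = MulOpposite.op (eperm c) :=
  PresentedGroup.toGroup.of Hrel

def A (g : B3) (p : S) : S := (MulOpposite.unop (Hhom g)) p

lemma A_one (p : S) : A 1 p = p := by simp [A]

lemma A_mul (g h : B3) (p : S) : A (g * h) p = A h (A g p) := by
  simp [A, map_mul]

lemma A_gen (c : Bool) (p : S) : A (gen c) p = eperm c p := by
  rw [gen_eq_of]
  show MulOpposite.unop (Hhom (PresentedGroup.of c)) p = _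
  rw [Hhom_of]
  rfl

lemma A_gen_inv (c : Bool) (p : S) : A ((gen c)⁻¹) p = (eperm c).symm p := by
  apply (eperm c).injective
  rw [show eperm c (A ((gen c)⁻¹) p) = A (gen c) (A ((gen c)⁻¹) p) from (A_gen _ _).symm,
    ← A_mul, inv_mul_cancel, A_one, Equiv.apply_symm_apply]

def ev (p : S) : B3 := syllEval p.1.1.reverse * Δ ^ p.1.2

lemma syllEval_append (u v : List (Bool × ℤ)) :
    syllEval (u ++ v) = syllEval u * syllEval v := by
  simp [syllEval]

lemma syllEval_cons (d : Bool) (m : ℤ) (t : List (Bool × ℤ)) :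
    syllEval ((d, m) :: t) = gen d ^ m * syllEval t := by simp [syllEval]

lemma syllEval_sing (d : Bool) (m : ℤ) : syllEval [(d, m)] = gen d ^ m := by simp [syllEval]

lemma syllEval_nil' : syllEval [] = 1 := rfl

lemma rpush_ev {c : Bool} {r : List (Bool × ℤ)} (h : RValid r) :
    syllEval ((rpush c r).1.reverse) * Δ ^ ((rpush c r).2) = syllEval r.reverse * gen c := by
  obtain ⟨h1, h2, h3⟩ := h
  match r with
  | [] =>
    rw [rpush_nil]
    show syllEval [(c, 1)].reverse * Δ ^ (0 : ℤ) = syllEval ([] : List (Bool × ℤ)).reverse * gen c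
    simp [syllEval_sing, syllEval_nil']
  | (d, m) :: t =>
    by_cases hdc : d = c
    · subst hdc
      by_cases hm : m = -1
      · subst hm
        rw [rpush_same_drop]
        show syllEval t.reverse * Δ ^ (0 : ℤ) = syllEval ((d, -1) :: t).reverse * gen d
        rw [List.reverse_cons, syllEval_append, syllEval_sing]
        group
      · rw [rpush_same hm]
        show syllEval ((d, m + 1) :: t).reverse * Δ ^ (0 : ℤ)
            = syllEval ((d, m) :: t).reverse * gen d
        rw [List.reverse_cons, List.reverse_cons, syllEval_append, syllEval_append,
          syllEval_sing, syllEval_sing]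
        group
    · have hd : d = !c := bool_eq_not hdc
      by_cases he : Even m
      · rw [rpush_diff_even hdc he]
        show syllEval ((c, 1) :: (d, m) :: t).reverse * Δ ^ (0 : ℤ)
            = syllEval ((d, m) :: t).reverse * gen c
        rw [List.reverse_cons (a := (c,1)), syllEval_append, syllEval_sing]
        group
      · by_cases hm1 : m = 1
        · subst hm1
          match t with
          | [] =>
            rw [rpush_rw1_nil hdc]
            show syllEval [(c, -1)].reverse * Δ ^ (1 : ℤ)
                = syllEval [(d, 1)].reverse * gen c
            subst hd
            rw [show syllEval [(c, -1)].reverse = gen c ^ (-1 : ℤ) by simp [syllEval_sing],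
              show syllEval [((!c), 1)].reverse = gen (!c) ^ (1 : ℤ) by simp [syllEval_sing],
              zpow_one, ← gen_braid c]
            group
          | (e, m') :: t' =>
            have hf := rvalid_cons_facts ⟨h1, h2, h3⟩
            have hec : e = c := by rw [hf.2.1, hd]; simp
            rw [rpush_rw1_cons hdc]
            show syllEval ((e, m' - 1) :: t').reverse * Δ ^ (1 : ℤ)
                = syllEval ((d, 1) :: (e, m') :: t').reverse * gen c
            subst hd; subst hec
            rw [List.reverse_cons, List.reverse_cons (a := ((!e), 1)),
              List.reverse_cons (a := (e, m'))]
            rw [syllEval_append, syllEval_append, syllEval_append,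
              syllEval_sing, syllEval_sing, syllEval_sing, zpow_one, ← gen_braid e]
            group
        · rw [rpush_rw hdc he hm1]
          show syllEval ((c, -1) :: (d, m - 1) :: t).reverse * Δ ^ (1 : ℤ)
              = syllEval ((d, m) :: t).reverse * gen c
          subst hd
          rw [List.reverse_cons (a := (c, -1)), List.reverse_cons (a := ((!c), m - 1)),
            List.reverse_cons (a := ((!c), m))]
          rw [syllEval_append, syllEval_append, syllEval_append,
            syllEval_sing, syllEval_sing, syllEval_sing, zpow_one, ← gen_braid c]
          group

lemma gen_comm_pow (k : ℤ) (c : Bool) :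
    gen (if Even k then c else !c) * Δ ^ k = Δ ^ k * gen c := by
  by_cases hk : Even k
  · rw [if_pos hk, conjΔpow k, if_pos hk]
  · rw [if_neg hk, conjΔpow k, if_neg hk, φ_gen, Bool.not_not]

lemma ev_eperm (c : Bool) (p : S) : ev (eperm c p) = ev p * gen c := by
  obtain ⟨⟨r, k⟩, hv⟩ := p
  show syllEval ((rpush (if Even k then c else !c) r).1.reverse)
      * Δ ^ (k + (rpush (if Even k then c else !c) r).2)
    = syllEval r.reverse * Δ ^ k * gen c
  rw [show k + (rpush (if Even k then c else !c) r).2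
      = (rpush (if Even k then c else !c) r).2 + k by ring,
    zpow_add, ← mul_assoc, rpush_ev hv, mul_assoc, gen_comm_pow, ← mul_assoc]

lemma ev_A (g : B3) : ∀ p : S, ev (A g p) = ev p * g := by
  refine b3_induction (fun g => ∀ p, ev (A g p) = ev p * g) ?_ ?_ ?_ ?_ g
  · intro p; rw [A_one, mul_one]
  · intro x y hx hy p
    rw [A_mul, hy, hx, mul_assoc]
  · intro x hx p
    have hxp := hx (A x⁻¹ p)
    rw [← A_mul, inv_mul_cancel, A_one] at hxp
    rw [hxp, mul_assoc, mul_inv_cancel, mul_one]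
  · intro c p
    rw [A_gen, ev_eperm]

lemma A_Delta (p : S) : (A Δ p).1 = (p.1.1, p.1.2 + 1) := by
  have hga : ∀ q, A ga q = eperm true q := fun q => A_gen true q
  have hgb : ∀ q, A gb q = eperm false q := fun q => A_gen false q
  have h1 : A Δ p = eperm true (eperm false (eperm true p)) := by
    rw [show Δ = ga * gb * ga from rfl, A_mul, A_mul, hga, hgb, hga]
  rw [h1]
  show act true (act false (act true p.1)) = (p.1.1, p.1.2 + 1)
  exact aba_all p.2

def baseK (k : ℤ) : S := ⟨([], k), rvalid_nil⟩

lemma A_Delta_pow (k : ℤ) : A (Δ ^ k) (baseK 0) = baseK k := by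
  induction k using Int.induction_on with
  | zero => rw [zpow_zero, A_one]
  | succ n ih =>
    rw [zpow_add_one, A_mul, ih]
    exact Subtype.ext (by rw [A_Delta]; rfl)
  | pred n ih =>
    have hstep : A Δ (baseK (-(n : ℤ) - 1)) = baseK (-(n : ℤ)) := by
      apply Subtype.ext
      rw [A_Delta]
      show (([] : List (Bool × ℤ)), -(n : ℤ) - 1 + 1) = ([], -(n : ℤ))
      rw [show -(n : ℤ) - 1 + 1 = -(n : ℤ) by ring]
    rw [zpow_sub_one, A_mul, ih, ← hstep, ← A_mul, mul_inv_cancel, A_one]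

def wt (r : List (Bool × ℤ)) : ℕ := (r.map (fun s => s.2.natAbs)).sum

@[simp] lemma wt_nil : wt [] = 0 := rfl
@[simp] lemma wt_cons {d : Bool} {m : ℤ} {t} : wt ((d, m) :: t) = m.natAbs + wt t := rfl

lemma act_eff {d : Bool} {r : List (Bool × ℤ)} {k : ℤ} :
    act (if Even k then d else !d) (r, k) = ((rpush d r).1, k + (rpush d r).2) := by
  show ((rpush (if Even k then (if Even k then d else !d)
      else !(if Even k then d else !d)) r).1, _) = _
  rw [show (if Even k then (if Even k then d else !d)
      else !(if Even k then d else !d)) = d by by_cases hk : Even k <;> simp [hk]]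

lemma actInv_eff {d : Bool} {r : List (Bool × ℤ)} {k : ℤ} :
    actInv (if Even k then d else !d) (r, k) = ((rpushInv d r).1, k + (rpushInv d r).2) := by
  show ((rpushInv (if Even k then (if Even k then d else !d)
      else !(if Even k then d else !d)) r).1, _) = _
  rw [show (if Even k then (if Even k then d else !d)
      else !(if Even k then d else !d)) = d by by_cases hk : Even k <;> simp [hk]]

lemma A_word_nil (k : ℤ) (hv : RValid ([] : List (Bool × ℤ))) :
    A (syllEval ((if Even k then ([] : List (Bool × ℤ)) else flipL []).reverse)) (baseK k)
      = ⟨([], k), hv⟩ := by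
  rw [show (if Even k then ([] : List (Bool × ℤ)) else flipL []) = [] by split <;> rfl,
    List.reverse_nil, syllEval_nil', A_one]
  rfl

lemma rvalid_change_head {d : Bool} {m m' : ℤ} {t} (h : RValid ((d, m) :: t)) (h0 : m' ≠ 0) :
    RValid ((d, m') :: t) := by
  obtain ⟨h1, h2, h3⟩ := h
  refine ⟨?_, ?_, h3⟩
  · intro s hs
    rcases List.mem_cons.1 hs with rfl | hs
    · exact h0
    · exact h1 s (by simp [hs])
  · unfold List.Chain' at h2 ⊢; rw [List.isChain_cons] at h2 ⊢; exact h2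

lemma A_word : ∀ (n : ℕ) (r : List (Bool × ℤ)), wt r ≤ n → ∀ (hv : RValid r) (k : ℤ),
    A (syllEval ((if Even k then r else flipL r).reverse)) (baseK k) = ⟨(r, k), hv⟩ := by
  intro n
  induction n with
  | zero =>
    intro r hw hv k
    match r with
    | [] => exact A_word_nil k hv
    | (d, m) :: t =>
      exfalso
      have hm0 : m ≠ 0 := hv.1 (d, m) (by simp)
      have : m.natAbs ≠ 0 := Int.natAbs_ne_zero.2 hm0
      simp only [wt_cons, Nat.le_zero] at hw
      omega
  | succ n ih =>
    intro r hw hv k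
    match r with
    | [] => exact A_word_nil k hv
    | (d, m) :: t =>
      have hm0 : m ≠ 0 := hv.1 (d, m) (by simp)
      have heff : (if Even k then (if Even k then d else !d)
          else !(if Even k then d else !d)) = d := by
        by_cases hk : Even k <;> simp [hk]
      have hlist : ∀ (m'' : ℤ), (if Even k then ((d, m'') :: t) else flipL ((d, m'') :: t)).reverse
          = (if Even k then t else flipL t).reverse ++ [((if Even k then d else !d), m'')] := by
        intro m''
        by_cases hk : Even k <;> simp [hk, flipL_cons']
      rcases lt_or_gt_of_ne hm0 with hmneg | hmpos
      · by_cases hm1 : m = -1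
        · subst hm1
          have hw' : wt t ≤ n := by simp only [wt_cons] at hw; omega
          have hv' : RValid t := rvalid_tail hv
          rw [hlist, syllEval_append, syllEval_sing, A_mul, ih t hw' hv' k,
            zpow_neg_one]
          erw [A_gen_inv]
          apply Subtype.ext
          show actInv (if Even k then d else !d) (t, k) = ((d, -1) :: t, k)
          rw [actInv_eff]
          match t with
          | [] => rw [rpushInv_nil]; simp
          | (e, m2) :: t2 =>
            have hf := rvalid_cons_facts hv
            have hed : e ≠ d := by rw [hf.2.1]; exact Ne.symm (bool_not_ne d)
            rw [rpushInv_diff_even hed hf.2.2.1]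
            simp
        · have hw' : wt ((d, m + 1) :: t) ≤ n := by
            simp only [wt_cons] at hw ⊢; omega
          have hv' : RValid ((d, m + 1) :: t) := rvalid_change_head hv (by omega)
          have hsplit : syllEval ((if Even k then t else flipL t).reverse
                ++ [((if Even k then d else !d), m)])
              = syllEval ((if Even k then t else flipL t).reverse
                ++ [((if Even k then d else !d), m + 1)])
                * gen (if Even k then d else !d) ^ (-1 : ℤ) := by
            rw [syllEval_append, syllEval_append, syllEval_sing, syllEval_sing,
              mul_assoc, ← zpow_add, show m + 1 + -1 = m by ring]
          rw [hlist, hsplit, ← hlist (m + 1), A_mul, ih _ hw' hv' k,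
            zpow_neg_one]
          erw [A_gen_inv]
          apply Subtype.ext
          show actInv (if Even k then d else !d) ((d, m + 1) :: t, k) = ((d, m) :: t, k)
          rw [actInv_eff, rpushInv_same (by omega), show m + 1 - 1 = m by ring]
          simp
      · by_cases hm1 : m = 1
        · subst hm1
          have hw' : wt t ≤ n := by simp only [wt_cons] at hw; omega
          have hv' : RValid t := rvalid_tail hv
          rw [hlist, syllEval_append, syllEval_sing, zpow_one, A_mul, ih t hw' hv' k]
          erw [A_gen]
          apply Subtype.ext
          show act (if Even k then d else !d) (t, k) = ((d, 1) :: t, k)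
          rw [act_eff]
          match t with
          | [] => rw [rpush_nil]; simp
          | (e, m2) :: t2 =>
            have hf := rvalid_cons_facts hv
            have hed : e ≠ d := by rw [hf.2.1]; exact Ne.symm (bool_not_ne d)
            rw [rpush_diff_even hed hf.2.2.1]
            simp
        · have hw' : wt ((d, m - 1) :: t) ≤ n := by
            simp only [wt_cons] at hw ⊢; omega
          have hv' : RValid ((d, m - 1) :: t) := rvalid_change_head hv (by omega)
          have hsplit : syllEval ((if Even k then t else flipL t).reverse
                ++ [((if Even k then d else !d), m)])
              = syllEval ((if Even k then t else flipL t).reverse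
                ++ [((if Even k then d else !d), m - 1)])
                * gen (if Even k then d else !d) ^ (1 : ℤ) := by
            rw [syllEval_append, syllEval_append, syllEval_sing, syllEval_sing,
              mul_assoc, ← zpow_add, show m - 1 + 1 = m by ring]
          rw [hlist, hsplit, ← hlist (m - 1), A_mul, ih _ hw' hv' k,
            zpow_one]
          erw [A_gen]
          apply Subtype.ext
          show act (if Even k then d else !d) ((d, m - 1) :: t, k) = ((d, m) :: t, k)
          rw [act_eff, rpush_same (by omega), show m - 1 + 1 = m by ring]
          simp

lemma flipL_reverse (r : List (Bool × ℤ)) : flipL r.reverse = (flipL r).reverse := by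
  simp [flipL, List.map_reverse]

lemma φ_syll (l : List (Bool × ℤ)) : φ (syllEval l) = syllEval (flipL l) := by
  induction l with
  | nil => simp [syllEval_nil']
  | cons x t ihl =>
    obtain ⟨d, m⟩ := x
    rw [syllEval_cons, map_mul, map_zpow, φ_gen, ihl, flipL_cons', syllEval_cons]

lemma reconstruct (p : S) : A (ev p) (baseK 0) = p := by
  obtain ⟨⟨r, k⟩, hv⟩ := p
  show A (syllEval r.reverse * Δ ^ k) (baseK 0) = ⟨(r, k), hv⟩
  have hc : syllEval r.reverse * Δ ^ k
      = Δ ^ k * syllEval ((if Even k then r else flipL r).reverse) := by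
    rw [conjΔpow]
    congr 1
    by_cases hk : Even k
    · rw [if_pos hk, if_pos hk]
    · rw [if_neg hk, if_neg hk, φ_syll, flipL_reverse]
  rw [hc, A_mul, A_Delta_pow, A_word (wt r) r le_rfl hv k]

lemma conv {l : List (Bool × ℤ)} :
    (IsSyllableWord l ∧ AlmostEven l) ↔ RValid l.reverse := by
  constructor
  · rintro ⟨⟨hnz, hch⟩, hae⟩
    refine ⟨?_, ?_, ?_⟩
    · intro s hs; exact hnz s (List.mem_reverse.1 hs)
    · unfold List.Chain' at hch ⊢; rw [List.isChain_reverse]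
      exact List.IsChain.imp (fun a b hab hh => hab hh.symm) hch
    · intro s hs
      rw [List.tail_reverse, List.mem_reverse] at hs
      obtain ⟨i, hi, rfl⟩ := List.mem_iff_getElem.1 hs
      have hlen : i + 1 < l.length := by
        have h2 := hi
        rw [List.length_dropLast] at h2
        omega
      have hthis := hae i hlen
      rw [getElem!_pos l i (by omega)] at hthis
      rw [show l.dropLast[i] = l[i]'(by omega) from by rw [List.getElem_dropLast]]
      exact hthis
  · rintro ⟨hnz, hch, hte⟩
    refine ⟨⟨?_, ?_⟩, ?_⟩
    · intro s hs; exact hnz s (List.mem_reverse.2 hs)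
    · exact List.IsChain.imp (fun a b hab hh => hab hh.symm) (List.isChain_reverse.1 hch)
    · intro i hi
      rw [getElem!_pos l i (by omega)]
      apply hte
      rw [List.tail_reverse, List.mem_reverse]
      exact List.mem_iff_getElem.2
        ⟨i, by rw [List.length_dropLast]; omega, by rw [List.getElem_dropLast]⟩

end B3NF

theorem stmt3 :
    ∀ g : B3, ∃! p : List (Bool × ℤ) × ℤ,
      IsSyllableWord p.1 ∧ AlmostEven p.1 ∧
      syllEval p.1 * (ga * gb * ga) ^ p.2 = g := by
  intro g
  refine ⟨((B3NF.A g (B3NF.baseK 0)).1.1.reverse, (B3NF.A g (B3NF.baseK 0)).1.2), ?_, ?_⟩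
  · have hv : B3NF.RValid ((B3NF.A g (B3NF.baseK 0)).1.1.reverse).reverse := by
      rw [List.reverse_reverse]; exact (B3NF.A g (B3NF.baseK 0)).2
    have hc := (B3NF.conv (l := (B3NF.A g (B3NF.baseK 0)).1.1.reverse)).2 hv
    refine ⟨hc.1, hc.2, ?_⟩
    have hA := B3NF.ev_A g (B3NF.baseK 0)
    have hbase : B3NF.ev (B3NF.baseK 0) = 1 := by
      show syllEval ([] : List (Bool × ℤ)).reverse * B3NF.Δ ^ (0 : ℤ) = 1
      simp [B3NF.syllEval_nil']
    rw [hbase, one_mul] at hA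
    show syllEval _ * (ga * gb * ga) ^ _ = g
    rw [show ga * gb * ga = B3NF.Δ from rfl]
    exact hA
  · rintro ⟨l, k⟩ ⟨h1, h2, h3⟩
    have hv2 : B3NF.RValid ((l.reverse, k) : B3NF.NF).1 := B3NF.conv.1 ⟨h1, h2⟩
    have hevQ : B3NF.ev ⟨(l.reverse, k), hv2⟩ = g := by
      show syllEval l.reverse.reverse * B3NF.Δ ^ k = g
      rw [List.reverse_reverse, show B3NF.Δ = ga * gb * ga from rfl]
      exact h3
    have hrec := B3NF.reconstruct ⟨(l.reverse, k), hv2⟩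
    rw [hevQ] at hrec
    rw [hrec]
    simp
end

section
/- In B_3, if a word w over {a, b, a⁻¹, b⁻¹} contains both a subword from {ab, ba} and a subword from {a⁻¹b⁻¹, b⁻¹a⁻¹}, then w is not geodesic with respect to the generating set {a, b, a⁻¹, b⁻¹}. -/
lemma rel : ga * gb * ga = gb * ga * gb := by
  have h : (QuotientGroup.mk (FreeGroup.of true * FreeGroup.of false * FreeGroup.of true *
    (FreeGroup.of false * FreeGroup.of true * FreeGroup.of false)⁻¹) : B3) = 1 := by
    apply (QuotientGroup.eq_one_iff _).mpr
    exact Subgroup.subset_normalClosure (by simp [B3Rel])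
  have h2 : ga * gb * ga * (gb * ga * gb)⁻¹ = 1 := h
  exact mul_inv_eq_one.mp h2

noncomputable def Δ : B3 := ga * gb * ga
def sw (l : Letter) : Letter := (!l.1, l.2)

lemma hA : Δ * ga = gb * Δ := by
  show (ga*gb*ga)*ga = gb*(ga*gb*ga)
  calc (ga*gb*ga)*ga = (gb*ga*gb)*ga := by rw [rel]
    _ = gb*(ga*gb*ga) := by simp [mul_assoc]

lemma hB : Δ * gb = ga * Δ := by
  show (ga*gb*ga)*gb = ga*(ga*gb*ga)
  calc (ga*gb*ga)*gb = ga*(gb*ga*gb) := by simp [mul_assoc]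
    _ = ga*(ga*gb*ga) := by rw [← rel]

lemma hA' : Δ * ga⁻¹ = gb⁻¹ * Δ := by
  have : gb⁻¹ * (Δ * ga) * ga⁻¹ = gb⁻¹ * (gb * Δ) * ga⁻¹ := by rw [hA]
  simpa [mul_assoc] using this.symm

lemma hB' : Δ * gb⁻¹ = ga⁻¹ * Δ := by
  have : ga⁻¹ * (Δ * gb) * gb⁻¹ = ga⁻¹ * (ga * Δ) * gb⁻¹ := by rw [hB]
  simpa [mul_assoc] using this.symm

lemma delta_letter (l : Letter) : Δ * evalLetter l = evalLetter (sw l) * Δ := by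
  obtain ⟨x, s⟩ := l
  cases x <;> cases s <;> simp [evalLetter, sw, gen, hA, hB, hA', hB']

lemma evalWord_cons (l : Letter) (w : List Letter) :
    evalWord (l :: w) = evalLetter l * evalWord w := by simp [evalWord]

lemma evalWord_append (u v : List Letter) :
    evalWord (u ++ v) = evalWord u * evalWord v := by simp [evalWord]

lemma delta_word (y : List Letter) : Δ * evalWord y = evalWord (y.map sw) * Δ := by
  induction y with
  | nil => simp [evalWord]
  | cons l t ih =>
    simp only [List.map_cons, evalWord_cons, ← mul_assoc, delta_letter]
    rw [mul_assoc, ih, mul_assoc]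

lemma pos_pair (p : Bool) : gen p * gen (!p) = Δ * (gen p)⁻¹ := by
  cases p
  · show gb * ga = (ga * gb * ga) * gb⁻¹
    rw [rel]; simp [mul_assoc]
  · show ga * gb = (ga * gb * ga) * ga⁻¹
    simp [mul_assoc]

lemma neg_pair (n : Bool) : (gen n)⁻¹ * (gen (!n))⁻¹ = gen (!n) * Δ⁻¹ := by
  have h := congrArg (·⁻¹) (pos_pair (!n))
  simp only [Bool.not_not] at h
  simpa [mul_inv_rev] using h

-- right-assoc cascade lemmas
lemma pos' (p : Bool) (R : B3) : gen p * (gen (!p) * R) = Δ * ((gen p)⁻¹ * R) := by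
  rw [← mul_assoc, ← mul_assoc, pos_pair]

lemma neg' (n : Bool) (R : B3) : (gen n)⁻¹ * ((gen (!n))⁻¹ * R) = gen (!n) * (Δ⁻¹ * R) := by
  rw [← mul_assoc, ← mul_assoc, neg_pair]

lemma dg (q : Bool) (R : B3) : Δ * (gen q * R) = gen (!q) * (Δ * R) := by
  cases q <;> rw [← mul_assoc, ← mul_assoc] <;> simp [gen, hA, hB]

lemma dgi (q : Bool) (R : B3) : Δ * ((gen q)⁻¹ * R) = (gen (!q))⁻¹ * (Δ * R) := by
  cases q <;> rw [← mul_assoc, ← mul_assoc] <;> simp [gen, hA', hB']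

lemma conj_swap {u v : B3} (h : Δ * u = v * Δ) : Δ⁻¹ * v = u * Δ⁻¹ := by
  have h2 : Δ⁻¹ * (Δ * u) * Δ⁻¹ = Δ⁻¹ * (v * Δ) * Δ⁻¹ := by rw [h]
  simpa [mul_assoc] using h2.symm

lemma dg' (q : Bool) (R : B3) : Δ⁻¹ * (gen q * R) = gen (!q) * (Δ⁻¹ * R) := by
  cases q
  · rw [← mul_assoc, ← mul_assoc]; show Δ⁻¹ * gb * R = ga * Δ⁻¹ * R; rw [conj_swap hA]
  · rw [← mul_assoc, ← mul_assoc]; show Δ⁻¹ * ga * R = gb * Δ⁻¹ * R; rw [conj_swap hB]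

lemma dgi' (q : Bool) (R : B3) : Δ⁻¹ * ((gen q)⁻¹ * R) = (gen (!q))⁻¹ * (Δ⁻¹ * R) := by
  cases q
  · rw [← mul_assoc, ← mul_assoc]; show Δ⁻¹ * gb⁻¹ * R = ga⁻¹ * Δ⁻¹ * R; rw [conj_swap hA']
  · rw [← mul_assoc, ← mul_assoc]; show Δ⁻¹ * ga⁻¹ * R = gb⁻¹ * Δ⁻¹ * R; rw [conj_swap hB']

lemma dw' (y : List Letter) (R : B3) :
    Δ * (evalWord y * R) = evalWord (y.map sw) * (Δ * R) := by
  rw [← mul_assoc, delta_word, mul_assoc]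

lemma sw_sw (y : List Letter) : (y.map sw).map sw = y := by
  rw [List.map_map]
  have h : sw ∘ sw = id := by funext l; cases l; simp [sw]
  rw [h, List.map_id]

lemma evalWord_nil : evalWord [] = 1 := rfl

lemma dWi (y : List Letter) (R : B3) :
    Δ⁻¹ * (evalWord y * R) = evalWord (y.map sw) * (Δ⁻¹ * R) := by
  have h := delta_word (y.map sw)
  rw [sw_sw] at h
  -- h : Δ * evalWord (y.map sw) = evalWord y * Δ
  have h2 : Δ⁻¹ * evalWord y = evalWord (y.map sw) * Δ⁻¹ := by
    have : Δ⁻¹ * (Δ * evalWord (y.map sw)) * Δ⁻¹ = Δ⁻¹ * (evalWord y * Δ) * Δ⁻¹ := by rw [h]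
    simpa [mul_assoc] using this.symm
  rw [← mul_assoc, h2, mul_assoc]

lemma caseA (p n : Bool) (x y z : List Letter) :
    evalWord (x ++ [((!p), false)] ++ y.map sw ++ [(n, true)] ++ z) =
    evalWord (x ++ [(p, true), (!p, true)] ++ y ++ [(n, false), (!n, false)] ++ z) := by
  simp [evalWord_append, evalWord_cons, evalWord_nil, evalLetter, mul_assoc,
    pos', neg', dg, dgi, dw']

lemma caseB (p n : Bool) (x y z : List Letter) :
    evalWord (x ++ [((!n), true)] ++ y.map sw ++ [(p, false)] ++ z) =
    evalWord (x ++ [(n, false), (!n, false)] ++ y ++ [(p, true), (!p, true)] ++ z) := by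
  simp [evalWord_append, evalWord_cons, evalWord_nil, evalLetter, mul_assoc,
    pos', neg', dg, dgi, dg', dgi', dWi]

lemma mem_of_index {s u t w : List Letter} (e : s ++ u ++ t = w) {k : ℕ}
    (hk : k < u.length) : ∃ l ∈ u, w[s.length + k]? = some l := by
  refine ⟨u[k], List.getElem_mem hk, ?_⟩
  rw [← e, List.append_assoc, List.getElem?_append_right (by omega)]
  have h2 : s.length + k - s.length = k := by omega
  rw [h2, List.getElem?_append_left hk, List.getElem?_eq_getElem hk]

lemma split {A B w s1 t1 s2 t2 : List Letter} (hA2 : A.length = 2)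
    (e1 : s1 ++ A ++ t1 = w) (e2 : s2 ++ B ++ t2 = w)
    (h : s1.length + 2 ≤ s2.length) :
    ∃ x y z, w = x ++ A ++ y ++ B ++ z := by
  refine ⟨s1, s2.drop (s1.length + 2), t2, ?_⟩
  have d1 : ((s1 ++ A) ++ t1).drop (s1.length + 2) = t1 := by
    have hl : (s1 ++ A).length = s1.length + 2 := by simp [hA2]
    rw [← hl, List.drop_left]
  have e1' : (s1 ++ A) ++ t1 = w := e1
  rw [e1'] at d1
  have e2' : s2 ++ (B ++ t2) = w := by rw [← e2]; simp [List.append_assoc]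
  have d2 : (s2 ++ (B ++ t2)).drop (s1.length + 2) =
      s2.drop (s1.length + 2) ++ (B ++ t2) := List.drop_append_of_le_length h
  rw [e2'] at d2
  have ht1 : t1 = s2.drop (s1.length + 2) ++ (B ++ t2) := by rw [← d1, d2]
  rw [← e1, ht1]
  simp [List.append_assoc]

lemma order {P N w : List Letter} (hP : P.length = 2) (hN : N.length = 2)
    (hPs : ∀ l ∈ P, l.2 = true) (hNs : ∀ l ∈ N, l.2 = false)
    (h1 : P <:+: w) (h2 : N <:+: w) :
    (∃ x y z, w = x ++ P ++ y ++ N ++ z) ∨ (∃ x y z, w = x ++ N ++ y ++ P ++ z) := by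
  obtain ⟨s1, t1, e1⟩ := h1
  obtain ⟨s2, t2, e2⟩ := h2
  have key : s1.length + 2 ≤ s2.length ∨ s2.length + 2 ≤ s1.length := by
    by_contra hcon
    push_neg at hcon
    set k := max s1.length s2.length with hk
    have h1k : k - s1.length < P.length := by omega
    have h2k : k - s2.length < N.length := by omega
    obtain ⟨l1, hl1, hg1⟩ := mem_of_index e1 h1k
    obtain ⟨l2, hl2, hg2⟩ := mem_of_index e2 h2k
    have hidx : s1.length + (k - s1.length) = s2.length + (k - s2.length) := by omega
    rw [hidx, hg2] at hg1
    have : l2 = l1 := Option.some.inj hg1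
    subst this
    have hT := hPs l2 hl1
    have hF := hNs l2 hl2
    rw [hT] at hF
    simp at hF
  rcases key with h | h
  · exact Or.inl (split hP e1 e2 h)
  · exact Or.inr (split hN e2 e1 h)

theorem stmt5 (w : List Letter)
    (h1 : [la, lb] <:+: w ∨ [lb, la] <:+: w)
    (h2 : [lA, lB] <:+: w ∨ [lB, lA] <:+: w) :
    ¬ IsGeodesic w := by
  have hp : ∃ p : Bool, [(p, true), ((!p), true)] <:+: w := by
    rcases h1 with h | h
    · exact ⟨true, h⟩
    · exact ⟨false, h⟩
  have hn : ∃ n : Bool, [(n, false), ((!n), false)] <:+: w := by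
    rcases h2 with h | h
    · exact ⟨true, h⟩
    · exact ⟨false, h⟩
  obtain ⟨p, hpw⟩ := hp
  obtain ⟨n, hnw⟩ := hn
  have hdec := order (P := [(p, true), ((!p), true)]) (N := [(n, false), ((!n), false)])
    rfl rfl
    (by intro l hl; simp only [List.mem_cons, List.not_mem_nil, or_false] at hl
        rcases hl with rfl | rfl <;> rfl)
    (by intro l hl; simp only [List.mem_cons, List.not_mem_nil, or_false] at hl
        rcases hl with rfl | rfl <;> rfl)
    hpw hnw
  intro hg
  rcases hdec with ⟨x, y, z, hw⟩ | ⟨x, y, z, hw⟩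
  · have hv := caseA p n x y z
    rw [← hw] at hv
    have hlen := hg _ hv
    rw [hw] at hlen
    simp [List.length_append] at hlen
  · have hv := caseB p n x y z
    rw [← hw] at hv
    have hlen := hg _ hv
    rw [hw] at hlen
    simp [List.length_append] at hlen
end
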